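/- Let n ∈ ℕ with n ≥ 2, let d ∣ n, and let b ∈ ℕ with gcd(b, n/d) = 1. Then there exists l ∈ {1, 2, …, n−1} such that gcd(l, n) = 1 and l·b ≡ 1 (mod n/d). -/
import Mathlib


/-- The inverse of `b` modulo `n/d` can be chosen coprime to `n`: if `d ∣ n`,
`n ≥ 2` and `gcd(b, n/d) = 1`, then there is `l ∈ [1, n−1]` with `gcd(l, n) = 1`
and `l·b ≡ 1 (mod n/d)`. -/
theorem exists_coprime_inverse_mod
    (n d b : ℕ) (hn : 2 ≤ n) (hd : d ∣ n) (hb : Nat.gcd b (n / d) = 1) :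
    ∃ l : ℕ, 1 ≤ l ∧ l ≤ n - 1 ∧ Nat.gcd l n = 1 ∧ l * b ≡ 1 [MOD n / d] := by
  set m := n / d with hm
  have hmdvd : m ∣ n := Nat.div_dvd_of_dvd hd
  have hn0 : n ≠ 0 := by omega
  haveI : NeZero n := ⟨hn0⟩
  -- inverse of b as a unit in ZMod m
  have hbcop : Nat.Coprime b m := hb
  set v : (ZMod m)ˣ := (ZMod.unitOfCoprime b hbcop)⁻¹ with hv
  obtain ⟨u, hu⟩ := ZMod.unitsMap_surjective hmdvd v
  set l : ℕ := ((u : ZMod n)).val with hl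
  have hcop : Nat.Coprime l n := ZMod.val_coe_unit_coprime u
  have hl1 : 1 ≤ l := by
    rcases Nat.eq_zero_or_pos l with h0 | h
    · exfalso
      rw [h0] at hcop
      simp [Nat.Coprime] at hcop
      omega
    · exact h
  refine ⟨l, hl1, ?_, hcop, ?_⟩
  · have := ZMod.val_lt ((u : ZMod n))
    omega
  · have hcast : ((l : ZMod m)) = (v : ZMod m) := by
      have h1 : (ZMod.castHom hmdvd (ZMod m)) (u : ZMod n) = (v : ZMod m) := by
        have := congrArg Units.val hu
        rw [ZMod.unitsMap_def] at this
        exact this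
      rw [hl, ZMod.natCast_val, ← h1]
      rfl
    have : ((l * b : ℕ) : ZMod m) = ((1 : ℕ) : ZMod m) := by
      push_cast
      rw [hcast]
      have : (v : ZMod m) * (b : ZMod m) = 1 := by
        have hbu : ((ZMod.unitOfCoprime b hbcop : (ZMod m)ˣ) : ZMod m) = (b : ZMod m) :=
          ZMod.coe_unitOfCoprime b hbcop
        rw [← hbu, hv]
        exact Units.inv_mul _
      simpa using this
    exact (ZMod.natCast_eq_natCast_iff _ _ _).mp this
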